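/- For m ≥ 2 and any (λ, μ) ≠ (0,0), the stabilizer in O(2) of the polynomial λ·p_m(x,y) + μ·q_m(x,y) is conjugate in O(2) to the dihedral group D_m; in particular it strictly contains K_m. -/

import Mathlib

/-!
Identify `ℝ²` with `ℂ` through `v ↦ v 0 + v 1 * I`. Then `λ p_m + μ q_m` is `z ↦ Re (c z^m)` with
`c = λ - μ i ≠ 0`, and precomposing with the rotation by `β`, where `c e^{imβ} = ‖c‖`, turns it into
`‖c‖ Re (z^m)`; so the stabilizer is conjugate to that of `Re (z^m)`. An orthogonal matrix acts as
`z ↦ e^{iθ} z` or `z ↦ e^{iθ} z̄`; as `z ↦ z^m` is onto and `Re w̄ = Re w`, either map fixes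
`Re (z^m)` exactly when `e^{iθ}` is an `m`-th root of unity, which singles out `D_m`. The
conjugating rotation commutes with `K_m`, and the reflections of `D_m` keep the inclusion strict.
-/

open MvPolynomial Real Matrix Complex

/-- The rotation of `ℝ²` by angle `θ`. -/
noncomputable def rotMat (θ : ℝ) : Matrix (Fin 2) (Fin 2) ℝ :=
  !![Real.cos θ, -Real.sin θ; Real.sin θ, Real.cos θ]

/-- The reflection `τ(x,y) = (x,-y)`. -/
noncomputable def reflMat : Matrix (Fin 2) (Fin 2) ℝ := !![1, 0; 0, -1]

/-- The stabilizer in `O(2)` of a polynomial `P`. -/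
def polyStab (P : MvPolynomial (Fin 2) ℝ) : Set (Matrix (Fin 2) (Fin 2) ℝ) :=
  {A | A * Aᵀ = 1 ∧ ∀ v : Fin 2 → ℝ, eval (A.mulVec v) P = eval v P}

/-- The cyclic group `K_m` of rotations of order `m`. -/
noncomputable def CycSet (m : ℕ) : Set (Matrix (Fin 2) (Fin 2) ℝ) :=
  {A | ∃ k : ℕ, k < m ∧ A = rotMat (2 * π * k / m)}

/-- The dihedral group `D_m = ⟨σ_m, τ⟩ ⊆ O(2)`, of order `2m`. -/
noncomputable def DihSet (m : ℕ) : Set (Matrix (Fin 2) (Fin 2) ℝ) :=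
  {A | ∃ k : ℕ, k < m ∧
    (A = rotMat (2 * π * k / m) ∨ A = rotMat (2 * π * k / m) * reflMat)}

open ComplexConjugate

lemma rotMat_mul_rotMat (a b : ℝ) : rotMat a * rotMat b = rotMat (a + b) := by
  ext i j
  fin_cases i <;> fin_cases j <;>
    simp [rotMat, Matrix.mul_apply, Real.cos_add, Real.sin_add] <;> ring

lemma rotMat_transpose (a : ℝ) : (rotMat a)ᵀ = rotMat (-a) := by
  ext i j
  fin_cases i <;> fin_cases j <;> simp [rotMat]

lemma rotMat_zero : rotMat 0 = 1 := by
  ext i j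
  fin_cases i <;> fin_cases j <;> simp [rotMat]

lemma rotMat_mul_transpose (a : ℝ) : rotMat a * (rotMat a)ᵀ = 1 := by
  rw [rotMat_transpose, rotMat_mul_rotMat, add_neg_cancel, rotMat_zero]

lemma reflMat_mul_transpose : reflMat * reflMatᵀ = 1 := by
  ext i j
  fin_cases i <;> fin_cases j <;> simp [reflMat, Matrix.mul_apply]

lemma det_rotMat (a : ℝ) : (rotMat a).det = 1 := by
  simp [rotMat, Matrix.det_fin_two_of, ← sq, Real.cos_sq_add_sin_sq]

lemma det_reflMat : reflMat.det = -1 := by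
  simp [reflMat, Matrix.det_fin_two_of]

lemma rotMat_eq_rotMat_of_exp_mul_I_eq {a b : ℝ} (h : cexp (a * I) = cexp (b * I)) :
    rotMat a = rotMat b := by
  have hcos : Real.cos a = Real.cos b := by
    simpa only [exp_ofReal_mul_I_re] using congrArg Complex.re h
  have hsin : Real.sin a = Real.sin b := by
    simpa only [exp_ofReal_mul_I_im] using congrArg Complex.im h
  rw [rotMat, rotMat, hcos, hsin]

lemma exists_cos_sin_eq {a c : ℝ} (h : a ^ 2 + c ^ 2 = 1) :
    ∃ θ : ℝ, Real.cos θ = a ∧ Real.sin θ = c := by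
  have hw : ‖(⟨a, c⟩ : ℂ)‖ = 1 := by
    rw [Complex.norm_def, Complex.normSq_mk, ← sq, ← sq, h, Real.sqrt_one]
  refine ⟨arg ⟨a, c⟩, ?_, ?_⟩
  · rw [Complex.cos_arg (norm_ne_zero_iff.mp (hw.trans_ne one_ne_zero)), hw, div_one]
  · rw [Complex.sin_arg, hw, div_one]

lemma exists_eq_rotMat_or_eq_rotMat_mul_reflMat {A : Matrix (Fin 2) (Fin 2) ℝ}
    (hA : A * Aᵀ = 1) : ∃ θ : ℝ, A = rotMat θ ∨ A = rotMat θ * reflMat := by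
  have hcol : Aᵀ * A = 1 := mul_eq_one_comm.mp hA
  have entry (i j : Fin 2) := congrFun (congrFun hcol i) j
  simp only [Matrix.mul_apply, Fin.sum_univ_two, Matrix.transpose_apply, Matrix.one_apply] at entry
  have h00 : A 0 0 ^ 2 + A 1 0 ^ 2 = 1 := by simpa [sq] using entry 0 0
  have h01 : A 0 0 * A 0 1 + A 1 0 * A 1 1 = 0 := by simpa using entry 0 1
  have h11 : A 0 1 ^ 2 + A 1 1 ^ 2 = 1 := by simpa [sq] using entry 1 1
  obtain ⟨θ, hcos, hsin⟩ := exists_cos_sin_eq h00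
  -- the second column is `t • (-A 1 0, A 0 0)` with `t = det A = ±1`
  set t := A 0 0 * A 1 1 - A 0 1 * A 1 0
  have hb : A 0 1 = -t * A 1 0 := by linear_combination A 0 0 * h01 - A 0 1 * h00
  have hd : A 1 1 = t * A 0 0 := by linear_combination A 1 0 * h01 - A 1 1 * h00
  have ht : t * t = 1 := by
    linear_combination (A 0 1 ^ 2 + A 1 1 ^ 2) * h00 + h11 - (A 0 0 * A 0 1 + A 1 0 * A 1 1) * h01
  refine ⟨θ, (mul_self_eq_one_iff.mp ht).imp (fun h => ?_) (fun h => ?_)⟩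
  all_goals
    rw [Matrix.eta_fin_two A, hb, hd, h, ← hcos, ← hsin]
    ext i j
    fin_cases i <;> fin_cases j <;> simp [rotMat, reflMat]

section OrthogonalStabilizer

variable {n : Type*} [Fintype n] [DecidableEq n]

lemma mul_mul_transpose_eq_one {A B : Matrix n n ℝ} (hA : A * Aᵀ = 1) (hB : B * Bᵀ = 1) :
    A * B * (A * B)ᵀ = 1 := by
  rw [Matrix.transpose_mul, Matrix.mul_assoc, ← Matrix.mul_assoc B, hB, Matrix.one_mul, hA]

def orthogonalStabilizer (f : (n → ℝ) → ℝ) : Set (Matrix n n ℝ) :=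
  {A | A * Aᵀ = 1 ∧ ∀ v, f (A *ᵥ v) = f v}

lemma mem_orthogonalStabilizer {f : (n → ℝ) → ℝ} {A : Matrix n n ℝ} :
    A ∈ orthogonalStabilizer f ↔ A * Aᵀ = 1 ∧ ∀ v, f (A *ᵥ v) = f v :=
  Iff.rfl

lemma orthogonalStabilizer_const_mul {r : ℝ} (hr : r ≠ 0) (f : (n → ℝ) → ℝ) :
    orthogonalStabilizer (fun v => r * f v) = orthogonalStabilizer f := by
  simp only [orthogonalStabilizer, mul_right_inj' hr]

lemma conj_orthogonal_injective {B : Matrix n n ℝ} (hB : B * Bᵀ = 1) :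
    Function.Injective (fun A => B * A * Bᵀ) := by
  have hB' : Bᵀ * B = 1 := mul_eq_one_comm.mp hB
  refine Function.LeftInverse.injective (g := fun A => Bᵀ * A * B) fun A => ?_
  simp only [Matrix.mul_assoc]
  rw [← Matrix.mul_assoc Bᵀ B, hB', Matrix.one_mul, Matrix.mul_one]

lemma orthogonalStabilizer_eq_image_conj {B : Matrix n n ℝ} (hB : B * Bᵀ = 1)
    (f : (n → ℝ) → ℝ) :
    orthogonalStabilizer f =
      (fun A => B * A * Bᵀ) '' orthogonalStabilizer (fun v => f (B *ᵥ v)) := by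
  have hBt : Bᵀ * Bᵀᵀ = 1 := by rw [Matrix.transpose_transpose, mul_eq_one_comm, hB]
  have hsurj : Function.Surjective (B *ᵥ ·) := fun w =>
    ⟨Bᵀ *ᵥ w, by simp only [Matrix.mulVec_mulVec, hB, Matrix.one_mulVec]⟩
  ext A
  refine ⟨fun ⟨hA, hfA⟩ => ⟨Bᵀ * A * B, ⟨?_, fun v => ?_⟩, ?_⟩,
    fun ⟨A', ⟨hA', hfA'⟩, hA⟩ => hA ▸ ⟨?_, hsurj.forall.mpr fun v => ?_⟩⟩
  · exact mul_mul_transpose_eq_one (mul_mul_transpose_eq_one hBt hA) hB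
  · dsimp only
    rw [Matrix.mulVec_mulVec, ← Matrix.mul_assoc, ← Matrix.mul_assoc, hB, Matrix.one_mul,
      ← Matrix.mulVec_mulVec, hfA]
  · simp only [Matrix.mul_assoc]
    rw [← Matrix.mul_assoc B Bᵀ, hB, Matrix.one_mul, Matrix.mul_one]
  · exact mul_mul_transpose_eq_one (mul_mul_transpose_eq_one hB hA') hBt
  · simpa only [Matrix.mulVec_mulVec, Matrix.mul_assoc, mul_eq_one_comm.mp hB, Matrix.mul_one]
      using hfA' v

end OrthogonalStabilizer

def toComplex (v : Fin 2 → ℝ) : ℂ := (v 0 : ℂ) + (v 1 : ℂ) * I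

lemma toComplex_rotMat_mulVec (θ : ℝ) (v : Fin 2 → ℝ) :
    toComplex (rotMat θ *ᵥ v) = cexp (θ * I) * toComplex v := by
  apply Complex.ext <;>
    simp [toComplex, rotMat, Matrix.mulVec, dotProduct, Fin.sum_univ_two,
      exp_ofReal_mul_I_re, exp_ofReal_mul_I_im, Complex.cos_ofReal_re, Complex.sin_ofReal_re] <;>
    ring

lemma toComplex_reflMat_mulVec (v : Fin 2 → ℝ) : toComplex (reflMat *ᵥ v) = conj (toComplex v) := by
  apply Complex.ext <;> simp [toComplex, reflMat, Matrix.mulVec, dotProduct, Fin.sum_univ_two]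

lemma exists_toComplex_pow_eq {m : ℕ} (hm : m ≠ 0) (w : ℂ) : ∃ v, toComplex v ^ m = w := by
  obtain ⟨z, rfl⟩ := IsAlgClosed.exists_pow_nat_eq w (Nat.pos_of_ne_zero hm)
  exact ⟨![z.re, z.im], by simp [toComplex, Complex.re_add_im]⟩

lemma eq_one_of_forall_re_mul_eq {u : ℂ} (h : ∀ w : ℂ, (u * w).re = w.re) : u = 1 := by
  apply Complex.ext
  · simpa using h 1
  · simpa using h (-I)

lemma rotMat_mem_orthogonalStabilizer_re_pow_iff {m : ℕ} (hm : m ≠ 0) (θ : ℝ) :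
    rotMat θ ∈ orthogonalStabilizer (fun v => (toComplex v ^ m).re) ↔ cexp (θ * I) ^ m = 1 := by
  simp only [mem_orthogonalStabilizer, rotMat_mul_transpose, true_and,
    toComplex_rotMat_mulVec, mul_pow]
  refine ⟨fun h => eq_one_of_forall_re_mul_eq fun w => ?_, fun h v => by rw [h, one_mul]⟩
  obtain ⟨v, rfl⟩ := exists_toComplex_pow_eq hm w
  exact h v

lemma rotMat_mul_reflMat_mem_orthogonalStabilizer_re_pow_iff {m : ℕ} (hm : m ≠ 0) (θ : ℝ) :
    rotMat θ * reflMat ∈ orthogonalStabilizer (fun v => (toComplex v ^ m).re) ↔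
      cexp (θ * I) ^ m = 1 := by
  have horth := mul_mul_transpose_eq_one (rotMat_mul_transpose θ) reflMat_mul_transpose
  simp only [mem_orthogonalStabilizer, horth, true_and, ← Matrix.mulVec_mulVec,
    toComplex_rotMat_mulVec, toComplex_reflMat_mulVec, mul_pow, ← map_pow]
  refine ⟨fun h => eq_one_of_forall_re_mul_eq fun w => ?_, fun h v => by rw [h, one_mul, conj_re]⟩
  obtain ⟨v, hv⟩ := exists_toComplex_pow_eq hm (conj w)
  simpa [hv] using h v

lemma exp_mul_I_pow_eq_one_iff {m : ℕ} (hm : m ≠ 0) (θ : ℝ) :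
    cexp (θ * I) ^ m = 1 ↔ ∃ k < m, cexp (θ * I) = cexp ((2 * π * k / m : ℝ) * I) := by
  have : NeZero m := ⟨hm⟩
  have hexp (k : ℕ) : cexp (2 * π * I / m) ^ k = cexp ((2 * π * k / m : ℝ) * I) := by
    rw [← Complex.exp_nat_mul]; congr 1; push_cast; ring
  constructor
  · intro h
    obtain ⟨k, hk, hζ⟩ := (Complex.isPrimitiveRoot_exp m hm).eq_pow_of_pow_eq_one h
    exact ⟨k, hk, hζ.symm.trans (hexp k)⟩
  · rintro ⟨k, -, h⟩
    rw [h, ← hexp, ← pow_mul, pow_mul', (Complex.isPrimitiveRoot_exp m hm).pow_eq_one, one_pow]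

lemma orthogonalStabilizer_re_pow {m : ℕ} (hm : m ≠ 0) :
    orthogonalStabilizer (fun v => (toComplex v ^ m).re) = DihSet m := by
  ext A
  constructor
  · intro hA
    obtain ⟨θ, rfl | rfl⟩ := exists_eq_rotMat_or_eq_rotMat_mul_reflMat hA.1
    · obtain ⟨k, hk, h⟩ := (exp_mul_I_pow_eq_one_iff hm θ).mp
        ((rotMat_mem_orthogonalStabilizer_re_pow_iff hm θ).mp hA)
      exact ⟨k, hk, .inl (rotMat_eq_rotMat_of_exp_mul_I_eq h)⟩
    · obtain ⟨k, hk, h⟩ := (exp_mul_I_pow_eq_one_iff hm θ).mp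
        ((rotMat_mul_reflMat_mem_orthogonalStabilizer_re_pow_iff hm θ).mp hA)
      exact ⟨k, hk, .inr (by rw [rotMat_eq_rotMat_of_exp_mul_I_eq h])⟩
  · rintro ⟨k, hk, rfl | rfl⟩
    · exact (rotMat_mem_orthogonalStabilizer_re_pow_iff hm _).mpr
        ((exp_mul_I_pow_eq_one_iff hm _).mpr ⟨k, hk, rfl⟩)
    · exact (rotMat_mul_reflMat_mem_orthogonalStabilizer_re_pow_iff hm _).mpr
        ((exp_mul_I_pow_eq_one_iff hm _).mpr ⟨k, hk, rfl⟩)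

lemma exists_re_mul_toComplex_rotMat_mulVec_pow {m : ℕ} (hm : m ≠ 0) (c : ℂ) :
    ∃ β : ℝ, ∀ v, (c * toComplex (rotMat β *ᵥ v) ^ m).re = ‖c‖ * (toComplex v ^ m).re := by
  refine ⟨-arg c / m, fun v => ?_⟩
  have hrot : c * cexp ((-arg c / m : ℝ) * I) ^ m = ‖c‖ := by
    rw [← Complex.exp_nat_mul]
    nth_rewrite 1 [← Complex.norm_mul_exp_arg_mul_I c]
    rw [mul_assoc, ← Complex.exp_add]
    push_cast
    field_simp
    simp
  rw [toComplex_rotMat_mulVec, mul_pow, ← mul_assoc, hrot, re_ofReal_mul]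

lemma cycSet_ssubset_dihSet {m : ℕ} (hm : m ≠ 0) : CycSet m ⊂ DihSet m := by
  have hsub : CycSet m ⊆ DihSet m := fun _ ⟨k, hk, hA⟩ => ⟨k, hk, .inl hA⟩
  refine (Set.ssubset_iff_of_subset hsub).mpr
    ⟨rotMat (2 * π * (0 : ℕ) / m) * reflMat, ⟨0, Nat.pos_of_ne_zero hm, .inr rfl⟩, ?_⟩
  rintro ⟨k, -, h⟩
  have := congrArg Matrix.det h
  rw [Matrix.det_mul, det_rotMat, det_rotMat, det_reflMat] at this
  norm_num at this

lemma image_conj_rotMat_cycSet (β : ℝ) (m : ℕ) :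
    (fun A => rotMat β * A * (rotMat β)ᵀ) '' CycSet m = CycSet m := by
  refine Set.EqOn.image_eq_self fun A ⟨k, _, hA⟩ => ?_
  rw [hA, rotMat_transpose, rotMat_mul_rotMat, rotMat_mul_rotMat, add_neg_cancel_comm]
  rfl

/-- For `m ≥ 2` and `(λ,μ) ≠ (0,0)`, the stabilizer in `O(2)` of
`λ·p_m + μ·q_m` is conjugate in `O(2)` to the dihedral group `D_m`;
in particular it strictly contains the rotation group `K_m`. -/
theorem stmt7 (m : ℕ) (hm : 2 ≤ m) (lam mu : ℝ) (hlm : (lam, mu) ≠ (0, 0))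
    (p q : MvPolynomial (Fin 2) ℝ)
    (hp : ∀ v : Fin 2 → ℝ, eval v p = (((v 0 : ℂ) + (v 1 : ℂ) * Complex.I) ^ m).re)
    (hq : ∀ v : Fin 2 → ℝ, eval v q = (((v 0 : ℂ) + (v 1 : ℂ) * Complex.I) ^ m).im) :
    (∃ B : Matrix (Fin 2) (Fin 2) ℝ, B * Bᵀ = 1 ∧
        polyStab (lam • p + mu • q) = (fun A => B * A * Bᵀ) '' DihSet m) ∧
      CycSet m ⊂ polyStab (lam • p + mu • q) := by
  have hm0 : m ≠ 0 := by omega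
  set c : ℂ := lam - mu * I
  have hc : c ≠ 0 := by
    contrapose! hlm
    simpa [c, Complex.ext_iff] using hlm
  have heval : (fun v => eval v (lam • p + mu • q)) = fun v => (c * toComplex v ^ m).re := by
    funext v
    simp [hp, hq, toComplex, c, Complex.mul_re]
  obtain ⟨β, hβ⟩ := exists_re_mul_toComplex_rotMat_mulVec_pow hm0 c
  have hstab : polyStab (lam • p + mu • q) =
      (fun A => rotMat β * A * (rotMat β)ᵀ) '' DihSet m := by
    change orthogonalStabilizer (fun v => eval v (lam • p + mu • q)) = _
    rw [heval, orthogonalStabilizer_eq_image_conj (rotMat_mul_transpose β)]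
    simp only [hβ, orthogonalStabilizer_const_mul (norm_ne_zero_iff.mpr hc),
      orthogonalStabilizer_re_pow hm0]
  refine ⟨⟨rotMat β, rotMat_mul_transpose β, hstab⟩, ?_⟩
  rw [hstab, ← image_conj_rotMat_cycSet β m]
  exact (conj_orthogonal_injective (rotMat_mul_transpose β)).image_strictMono
    (cycSet_ssubset_dihSet hm0)
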